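/- arXiv:1905.12695 — 4 statements merged into one kernel-verified Lean document; each statement's English description precedes it below -/
import Mathlib

section
/- Let n be a positive integer and let A, B be real n×n matrices such that I − AᵀA is positive semidefinite, I − BᵀB is positive definite, and B has rank n. Then det((I − AᵀA)(I − BᵀB)) ≤ (det(I − AᵀB))². -/
/-!
Hua's identity
`(1 - AᵀB)(1 - BᵀB)⁻¹(1 - BᵀA) = (1 - AᵀA) + (A - B)ᵀ(1 - BBᵀ)⁻¹(A - B)`
exhibits the left side as `1 - AᵀA` plus a positive semidefinite matrix, because
`(1 - BBᵀ)⁻¹ = 1 + B(1 - BᵀB)⁻¹Bᵀ`. The determinant is monotone on positive semidefinite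
matrices, so `det (1 - AᵀA) ≤ det (1 - AᵀB) ^ 2 / det (1 - BᵀB)`.
-/

open Matrix
open scoped MatrixOrder

namespace Matrix

section CommRing

variable {R : Type*} [CommRing R] {m n : Type*} [Fintype m] [Fintype n] [DecidableEq m]
  [DecidableEq n]

theorem inv_one_sub_mul_eq_one_add (X : Matrix m n R) (Y : Matrix n m R)
    (h : IsUnit (1 - Y * X).det) :
    (1 - X * Y)⁻¹ = 1 + X * (1 - Y * X)⁻¹ * Y := by
  apply inv_eq_right_inv
  calc (1 - X * Y) * (1 + X * (1 - Y * X)⁻¹ * Y)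
      = 1 - X * Y + X * ((1 - Y * X) * (1 - Y * X)⁻¹) * Y := by
        simp only [Matrix.sub_mul, Matrix.mul_add, Matrix.mul_sub, Matrix.one_mul,
          Matrix.mul_one, Matrix.mul_assoc]
    _ = 1 := by rw [mul_nonsing_inv _ h, Matrix.mul_one, sub_add_cancel]

theorem sub_mul_inv_mul_sub {C : Matrix n n R} (h : IsUnit C.det) (M N : Matrix n n R) :
    (C - M) * C⁻¹ * (C - N) = C - M - N + M * C⁻¹ * N := by
  calc (C - M) * C⁻¹ * (C - N) = C * C⁻¹ * C - M * (C⁻¹ * C) - C * C⁻¹ * N + M * C⁻¹ * N := by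
        noncomm_ring
    _ = C - M - N + M * C⁻¹ * N := by
        rw [mul_nonsing_inv _ h, nonsing_inv_mul _ h]
        noncomm_ring

theorem hua_identity (A B : Matrix m n R) (h : IsUnit (1 - Bᵀ * B).det) :
    (1 - Aᵀ * B) * (1 - Bᵀ * B)⁻¹ * (1 - Bᵀ * A)
      = (1 - Aᵀ * A) + (A - B)ᵀ * (1 - B * Bᵀ)⁻¹ * (A - B) := by
  rw [inv_one_sub_mul_eq_one_add B Bᵀ h, transpose_sub]
  set C := 1 - Bᵀ * B with hC
  symm
  calc (1 - Aᵀ * A) + (Aᵀ - Bᵀ) * (1 + B * C⁻¹ * Bᵀ) * (A - B)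
      = (1 - Aᵀ * A) + (Aᵀ - Bᵀ) * (A - B) + ((Aᵀ - Bᵀ) * B) * C⁻¹ * (Bᵀ * (A - B)) := by
        simp only [Matrix.mul_add, Matrix.add_mul, Matrix.mul_one, Matrix.mul_assoc, add_assoc]
    _ = (1 - Aᵀ * A) + (Aᵀ - Bᵀ) * (A - B)
          + (C - (1 - Aᵀ * B)) * C⁻¹ * (C - (1 - Bᵀ * A)) := by
        congr 3 <;> simp only [hC, Matrix.sub_mul, Matrix.mul_sub] <;> abel
    _ = (1 - Aᵀ * B) * C⁻¹ * (1 - Bᵀ * A) := by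
        rw [sub_mul_inv_mul_sub h, hC]
        simp only [Matrix.sub_mul, Matrix.mul_sub]
        abel

end CommRing

section Real

variable {m n : Type*} [Fintype m] [Fintype n] [DecidableEq m] [DecidableEq n]

theorem PosSemidef.one_le_det_one_add {Q : Matrix n n ℝ} (hQ : Q.PosSemidef) :
    1 ≤ (1 + Q).det := by
  have hH : (1 + Q).IsHermitian := (PosSemidef.one.add hQ).isHermitian
  rw [hH.det_eq_prod_eigenvalues]
  refine Finset.one_le_prod (fun i _ => ?_)
  have hmem : (hH.eigenvalues i - 1) + 1 ∈ spectrum ℝ (algebraMap ℝ _ 1 + Q) := by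
    simpa using hH.eigenvalues_mem_spectrum_real i
  rw [spectrum.add_mem_iff, neg_add_cancel_left] at hmem
  simpa using spectrum_nonneg_of_nonneg hQ.nonneg hmem

theorem PosSemidef.det_le_det_add {M P : Matrix n n ℝ} (hM : M.PosSemidef) (hP : P.PosSemidef) :
    M.det ≤ (M + P).det := by
  rcases eq_or_ne M.det 0 with h0 | h0
  · exact h0 ▸ (hM.add hP).det_nonneg
  obtain ⟨X, rfl⟩ := CStarAlgebra.nonneg_iff_eq_star_mul_self.mp hM.nonneg
  rw [star_eq_conjTranspose] at h0 ⊢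
  have hX : IsUnit X.det := isUnit_iff_ne_zero.mpr (right_ne_zero_of_mul (det_mul Xᴴ X ▸ h0))
  have hsplit : Xᴴ * X + P = Xᴴ * (1 + X⁻¹ᴴ * P * X⁻¹) * X :=
    calc Xᴴ * X + P = Xᴴ * X + (X⁻¹ * X)ᴴ * P * (X⁻¹ * X) := by
          rw [nonsing_inv_mul _ hX, conjTranspose_one, Matrix.one_mul, Matrix.mul_one]
      _ = Xᴴ * (1 + X⁻¹ᴴ * P * X⁻¹) * X := by
          rw [conjTranspose_mul]
          noncomm_ring
  have hdet : (Xᴴ * X + P).det = (Xᴴ * X).det * (1 + X⁻¹ᴴ * P * X⁻¹).det := by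
    rw [hsplit, det_mul, det_mul, det_mul]
    ring
  rw [hdet]
  exact le_mul_of_one_le_right hM.det_nonneg
    (hP.conjTranspose_mul_mul_same X⁻¹).one_le_det_one_add

theorem det_one_sub_transpose_mul_self_mul_det_le {A B : Matrix m n ℝ}
    (hA : (1 - Aᵀ * A).PosSemidef) (hB : (1 - Bᵀ * B).PosDef) :
    (1 - Aᵀ * A).det * (1 - Bᵀ * B).det ≤ (1 - Aᵀ * B).det ^ 2 := by
  have hC : 0 < (1 - Bᵀ * B).det := hB.det_pos
  have hCu : IsUnit (1 - Bᵀ * B).det := hC.ne'.isUnit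
  have hD : (1 - B * Bᵀ)⁻¹.PosSemidef := by
    rw [inv_one_sub_mul_eq_one_add B Bᵀ hCu]
    simpa [conjTranspose_eq_transpose_of_trivial] using
      PosSemidef.one.add (hB.inv.posSemidef.mul_mul_conjTranspose_same B)
  have hP : ((A - B)ᵀ * (1 - B * Bᵀ)⁻¹ * (A - B)).PosSemidef := by
    simpa [conjTranspose_eq_transpose_of_trivial] using hD.conjTranspose_mul_mul_same (A - B)
  have hdet : (1 - Bᵀ * A).det = (1 - Aᵀ * B).det := by
    rw [← det_transpose, transpose_sub, transpose_one, transpose_mul, transpose_transpose]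
  have hle := hA.det_le_det_add hP
  rw [← hua_identity A B hCu, det_mul, det_mul, det_nonsing_inv, Ring.inverse_eq_inv', hdet] at hle
  calc (1 - Aᵀ * A).det * (1 - Bᵀ * B).det
      ≤ (1 - Aᵀ * B).det * (1 - Bᵀ * B).det⁻¹ * (1 - Aᵀ * B).det * (1 - Bᵀ * B).det := by
        gcongr
    _ = (1 - Aᵀ * B).det ^ 2 := by field_simp

end Real

end Matrix

theorem hua_det_inequality_general (n : ℕ) (A B : Matrix (Fin n) (Fin n) ℝ)
    (hA : (1 - Aᵀ * A).PosSemidef) (hB : (1 - Bᵀ * B).PosDef) :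
    ((1 - Aᵀ * A) * (1 - Bᵀ * B)).det ≤ (1 - Aᵀ * B).det ^ 2 := by
  rw [det_mul]
  exact det_one_sub_transpose_mul_self_mul_det_le hA hB

/-- **Hua's determinant inequality.** Let `A, B` be real `n × n` matrices such that
`I - AᵀA` is positive semidefinite, `I - BᵀB` is positive definite, and `B` has rank `n`.
Then `det((I - AᵀA)(I - BᵀB)) ≤ (det (I - AᵀB))²`. -/
theorem hua_det_inequality (n : ℕ) (hn : 0 < n) (A B : Matrix (Fin n) (Fin n) ℝ)
    (hA : (1 - Aᵀ * A).PosSemidef) (hB : (1 - Bᵀ * B).PosDef) (hrank : B.rank = n) :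
    ((1 - Aᵀ * A) * (1 - Bᵀ * B)).det ≤ (1 - Aᵀ * B).det ^ 2 :=
  hua_det_inequality_general n A B hA hB
end

section
/- Let n be a positive integer, let D = Diag(d₁, …, d_n) be a diagonal real n×n matrix with 1 > d₁ ≥ d₂ ≥ … ≥ d_n > 0, and write D^{1/2} = Diag(√d₁, …, √d_n). Let Q be a symmetric real n×n matrix with D ⪯ Q ⪯ D⁻¹. Then det((I − D^{1/2}Q⁻¹D^{1/2})(I − D^{1/2}Q D^{1/2})) ≤ det((I − D)²), and if moreover Q ≠ I then the inequality is strict. -/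
/-!
Write `S = D^{1/2}`. Since `D ⪯ Q ⪯ D⁻¹` also gives `Q⁻¹ ⪯ D⁻¹`, both factors `M₁ = I - S Q⁻¹ S`
and `M₂ = I - S Q S` are positive semidefinite, and the determinantal AM–GM inequality
`det M₁ det M₂ ≤ det((M₁ + M₂)/2)²` reduces the claim to comparing `(M₁ + M₂)/2` with `I - D`.
Now `I - D - (M₁ + M₂)/2 = ½ S (Q + Q⁻¹ - 2) S`, and `Q + Q⁻¹ - 2 = (Q - I) Q⁻¹ (Q - I) ⪰ 0`.
The determinant is monotone on `0 ⪯ A ⪯ B` with `B ≻ 0`, strictly so unless `A = B`, and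
`Q + Q⁻¹ = 2` forces `Q = I` since a symmetric matrix with zero square vanishes.
-/

open Matrix
open scoped MatrixOrder

namespace Matrix

variable {m : Type*} [Fintype m]

lemma IsHermitian.eq_zero_of_mul_self_eq_zero {A : Matrix m m ℝ} (hA : A.IsHermitian)
    (h : A * A = 0) : A = 0 := by
  rw [← trace_conjTranspose_mul_self_eq_zero_iff, hA.eq, h, trace_zero]

variable [DecidableEq m] {A B P Q : Matrix m m ℝ}

lemma IsHermitian.det_cfc (hA : A.IsHermitian) (f : ℝ → ℝ) :
    (cfc f A).det = ∏ i, f (hA.eigenvalues i) := by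
  rw [hA.cfc_eq]
  simp [IsHermitian.cfc, -Unitary.conjStarAlgAut_apply]

lemma IsHermitian.det_eq_prod_eigenvalues_real (hA : A.IsHermitian) :
    A.det = ∏ i, hA.eigenvalues i := by
  simpa using hA.det_eq_prod_eigenvalues

lemma eigenvalues_mem_Icc_of_le_one (hA : 0 ≤ A) (h1 : A ≤ 1) (i : m) :
    (nonneg_iff_posSemidef.mp hA).isHermitian.eigenvalues i ∈ Set.Icc (0 : ℝ) 1 :=
  ⟨(nonneg_iff_posSemidef.mp hA).eigenvalues_nonneg i,
    (CFC.le_one_iff A hA.isSelfAdjoint).mp h1 _ (IsHermitian.eigenvalues_mem_spectrum_real _ i)⟩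

lemma det_lt_one_of_le_one (hA : 0 ≤ A) (h1 : A ≤ 1) (hne : A ≠ 1) : A.det < 1 := by
  have hH := (nonneg_iff_posSemidef.mp hA).isHermitian
  have hev := eigenvalues_mem_Icc_of_le_one hA h1
  obtain ⟨i, hi⟩ : ∃ i, hH.eigenvalues i < 1 := by
    by_contra! h
    refine hne (CFC.eq_one_of_spectrum_subset_one (R := ℝ) A ?_ hA.isSelfAdjoint)
    rw [hH.spectrum_real_eq_range_eigenvalues]
    rintro _ ⟨j, rfl⟩
    exact le_antisymm (hev j).2 (h j)
  rw [hH.det_eq_prod_eigenvalues_real, ← Finset.mul_prod_erase _ _ (Finset.mem_univ i)]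
  calc hH.eigenvalues i * ∏ j ∈ Finset.univ.erase i, hH.eigenvalues j
      ≤ hH.eigenvalues i := mul_le_of_le_one_right (hev i).1
        (Finset.prod_le_one (fun j _ => (hev j).1) fun j _ => (hev j).2)
    _ < 1 := hi

lemma PosDef.exists_isSelfAdjoint_mul_self_eq (hA : A.PosDef) :
    ∃ R : Matrix m m ℝ, IsSelfAdjoint R ∧ IsUnit R.det ∧ R * R = A :=
  ⟨CFC.sqrt A, (CFC.sqrt_nonneg A).isSelfAdjoint,
    (isUnit_iff_isUnit_det _).mp <| CFC.isUnit_sqrt_iff_isStrictlyPositive.mpr <|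
      isStrictlyPositive_iff_posDef.mpr hA,
    CFC.sqrt_mul_sqrt_self A hA.posSemidef.nonneg⟩

lemma det_lt_det_of_le_of_ne (hA : 0 ≤ A) (hAB : A ≤ B) (hB : B.PosDef) (hne : A ≠ B) :
    A.det < B.det := by
  obtain ⟨R, hR, hRu, rfl⟩ := hB.exists_isSelfAdjoint_mul_self_eq
  have hRi : IsSelfAdjoint R⁻¹ := IsHermitian.inv hR
  set C := R⁻¹ * A * R⁻¹ with hC
  have hconj : R * C * R = A := by
    simp only [hC, ← mul_assoc, mul_nonsing_inv _ hRu, one_mul,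
      nonsing_inv_mul_cancel_right R A hRu]
  have hC1 : C ≤ 1 := by
    simpa [← mul_assoc, nonsing_inv_mul _ hRu, mul_nonsing_inv _ hRu] using
      hRi.conjugate_le_conjugate hAB
  have hCne : C ≠ 1 := fun h => hne (by rw [← hconj, h, mul_one])
  have hdetR : 0 < (R * R).det := by
    rw [det_mul]
    exact mul_self_pos.mpr hRu.ne_zero
  calc A.det = (R * R).det * C.det := by rw [← hconj]; simp only [det_mul]; ring
    _ < (R * R).det :=
      mul_lt_of_lt_one_right hdetR (det_lt_one_of_le_one (hRi.conjugate_nonneg hA) hC1 hCne)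

lemma det_le_det_of_le (hA : 0 ≤ A) (hAB : A ≤ B) (hB : B.PosDef) : A.det ≤ B.det := by
  rcases eq_or_ne A B with rfl | hne
  · rfl
  · exact (det_lt_det_of_le_of_ne hA hAB hB hne).le

lemma inv_le_one_of_one_le (h : 1 ≤ P) : P⁻¹ ≤ 1 := by
  have hP : P.PosDef := by simpa using PosDef.one.add_posSemidef (le_iff.mp h)
  have hspec : ∀ x ∈ spectrum ℝ P, 1 ≤ x := (CFC.one_le_iff P).mp h
  have hinv : cfc (fun x : ℝ => x⁻¹) P = P⁻¹ := by
    rw [nonsing_inv_eq_ringInverse]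
    exact cfc_ringInverse_id P hP.isUnit
  rw [← hinv, cfc_le_one_iff (fun x : ℝ => x⁻¹) P
      (continuousOn_inv₀.mono fun x hx => (zero_lt_one.trans_le (hspec x hx)).ne')]
  exact fun x hx => inv_le_one_of_one_le₀ (hspec x hx)

lemma inv_le_inv_of_le (hA : A.PosDef) (hAB : A ≤ B) : B⁻¹ ≤ A⁻¹ := by
  obtain ⟨R, hR, hRu, rfl⟩ := hA.exists_isSelfAdjoint_mul_self_eq
  have hRi : IsSelfAdjoint R⁻¹ := IsHermitian.inv hR
  have hC : 1 ≤ R⁻¹ * B * R⁻¹ := by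
    simpa [← mul_assoc, nonsing_inv_mul _ hRu, mul_nonsing_inv _ hRu] using
      hRi.conjugate_le_conjugate hAB
  have hCinv : (R⁻¹ * B * R⁻¹)⁻¹ = R * B⁻¹ * R := by
    rw [mul_inv_rev, mul_inv_rev, nonsing_inv_nonsing_inv R hRu, mul_assoc]
  simpa [hCinv, ← mul_assoc, nonsing_inv_mul _ hRu, mul_nonsing_inv_cancel_right _ _ hRu,
    mul_inv_rev] using
    hRi.conjugate_le_conjugate (inv_le_one_of_one_le hC)

lemma two_le_add_inv (hQ : Q.PosDef) : 2 ≤ Q + Q⁻¹ := by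
  have hu : IsUnit Q.det := (isUnit_iff_isUnit_det Q).mp hQ.isUnit
  have hsq : (Q - 1) * Q⁻¹ * (Q - 1) = Q + Q⁻¹ - 2 := by
    rw [← one_add_one_eq_two]
    simp only [sub_mul, mul_sub, one_mul, mul_one, mul_nonsing_inv _ hu, nonsing_inv_mul _ hu]
    abel
  rw [← sub_nonneg, ← hsq]
  exact IsSelfAdjoint.conjugate_nonneg hQ.inv.posSemidef.nonneg
    (hQ.isHermitian.sub isHermitian_one)

lemma eq_one_of_add_inv_eq_two (hQ : Q.IsHermitian) (hu : IsUnit Q.det) (h : Q + Q⁻¹ = 2) :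
    Q = 1 := by
  have hsq : (Q - 1) * (Q - 1) = Q * (Q + Q⁻¹ - 2) := by
    rw [← one_add_one_eq_two]
    simp only [sub_mul, mul_sub, mul_add, one_mul, mul_one, mul_nonsing_inv _ hu]
    abel
  rw [h, sub_self, mul_zero] at hsq
  exact sub_eq_zero.mp ((hQ.sub isHermitian_one).eq_zero_of_mul_self_eq_zero hsq)

lemma PosSemidef.det_le_det_two_inv_smul_one_add_sq (hP : P.PosSemidef) :
    P.det ≤ ((2⁻¹ : ℝ) • (1 + P)).det ^ 2 := by
  have hP' : IsSelfAdjoint P := hP.isHermitian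
  have hcfc : (2⁻¹ : ℝ) • (1 + P) = cfc (fun x : ℝ => 2⁻¹ * (1 + x)) P := by
    rw [cfc_const_mul (2⁻¹ : ℝ) (fun x : ℝ => 1 + x) P, cfc_const_add (1 : ℝ) (fun x : ℝ => x) P,
      cfc_id' ℝ P, Algebra.algebraMap_eq_smul_one, one_smul]
  rw [hcfc, IsHermitian.det_cfc hP.isHermitian, hP.isHermitian.det_eq_prod_eigenvalues_real,
    ← Finset.prod_pow]
  refine Finset.prod_le_prod (fun i _ => hP.eigenvalues_nonneg i) fun i _ => ?_
  nlinarith [sq_nonneg (1 - hP.isHermitian.eigenvalues i)]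

lemma det_mul_det_le_det_two_inv_smul_add_sq (hA : 0 ≤ A) (hB : 0 ≤ B) :
    A.det * B.det ≤ ((2⁻¹ : ℝ) • (A + B)).det ^ 2 := by
  by_cases hdet : A.det = 0
  · rw [hdet, zero_mul]
    exact sq_nonneg _
  obtain ⟨R, hR, hRu, rfl⟩ := ((nonneg_iff_posSemidef.mp hA).posDef_iff_det_ne_zero.mpr
    hdet).exists_isSelfAdjoint_mul_self_eq
  set P := R⁻¹ * B * R⁻¹ with hP
  have hPnonneg : 0 ≤ P := IsSelfAdjoint.conjugate_nonneg hB (IsHermitian.inv hR)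
  have hconj : R * P * R = B := by
    simp only [hP, ← mul_assoc, mul_nonsing_inv _ hRu, one_mul,
      nonsing_inv_mul_cancel_right R B hRu]
  have hsum : (2⁻¹ : ℝ) • (R * R + B) = R * ((2⁻¹ : ℝ) • (1 + P)) * R := by
    rw [← hconj, mul_smul_comm, smul_mul_assoc, mul_add, add_mul, mul_one]
  have hP2 := (nonneg_iff_posSemidef.mp hPnonneg).det_le_det_two_inv_smul_one_add_sq
  rw [hsum, ← hconj]
  simp only [det_mul]
  calc R.det * R.det * (R.det * P.det * R.det) = (R.det * R.det) ^ 2 * P.det := by ring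
    _ ≤ (R.det * R.det) ^ 2 * ((2⁻¹ : ℝ) • (1 + P)).det ^ 2 :=
      mul_le_mul_of_nonneg_left hP2 (by positivity)
    _ = (R.det * ((2⁻¹ : ℝ) • (1 + P)).det * R.det) ^ 2 := by ring

lemma one_sub_mul_self_sub_two_inv_smul_add (S Q : Matrix m m ℝ) :
    (1 - S * S) - (2⁻¹ : ℝ) • ((1 - S * Q⁻¹ * S) + (1 - S * Q * S)) =
      (2⁻¹ : ℝ) • (S * (Q + Q⁻¹ - 2) * S) := by
  rw [show (2 : Matrix m m ℝ) = 1 + 1 from one_add_one_eq_two.symm]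
  simp only [mul_add, add_mul, mul_sub, sub_mul, mul_one]
  module

theorem det_one_sub_conj_inv_mul_one_sub_conj_le {S Q : Matrix m m ℝ} (hS : IsSelfAdjoint S)
    (hSu : IsUnit S.det) (hN : (1 - S * S).PosDef) (hDQ : S * S ≤ Q) (hQD : Q ≤ (S * S)⁻¹) :
    ((1 - S * Q⁻¹ * S) * (1 - S * Q * S)).det ≤ ((1 - S * S) * (1 - S * S)).det ∧
      (Q ≠ 1 → ((1 - S * Q⁻¹ * S) * (1 - S * Q * S)).det < ((1 - S * S) * (1 - S * S)).det) := by
  have hD : (S * S).PosDef := by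
    have hSH : Sᴴ = S := hS
    have := PosDef.conjTranspose_mul_self S
      (mulVec_injective_iff_isUnit.mpr ((isUnit_iff_isUnit_det S).mpr hSu))
    rwa [hSH] at this
  have hQ : Q.PosDef := by simpa using hD.add_posSemidef (le_iff.mp hDQ)
  have hSDS : S * (S * S)⁻¹ * S = 1 := by
    rw [mul_inv_rev, ← mul_assoc, mul_nonsing_inv S hSu, one_mul, nonsing_inv_mul S hSu]
  set M₁ := 1 - S * Q⁻¹ * S
  set M₂ := 1 - S * Q * S
  set N := 1 - S * S
  set H := (2⁻¹ : ℝ) • (M₁ + M₂)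
  have hM₁ : 0 ≤ M₁ :=
    sub_nonneg.mpr <| hSDS ▸ hS.conjugate_le_conjugate (inv_le_inv_of_le hD hDQ)
  have hM₂ : 0 ≤ M₂ := sub_nonneg.mpr <| hSDS ▸ hS.conjugate_le_conjugate hQD
  have hH0 : 0 ≤ H := smul_nonneg (by norm_num) (add_nonneg hM₁ hM₂)
  have hNH : N - H = (2⁻¹ : ℝ) • (S * (Q + Q⁻¹ - 2) * S) :=
    one_sub_mul_self_sub_two_inv_smul_add S Q
  have hHN : H ≤ N := sub_nonneg.mp <| hNH ▸
    smul_nonneg (by norm_num) (hS.conjugate_nonneg (sub_nonneg.mpr (two_le_add_inv hQ)))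
  have hamgm := det_mul_det_le_det_two_inv_smul_add_sq hM₁ hM₂
  have hdetH := (nonneg_iff_posSemidef.mp hH0).det_nonneg
  rw [det_mul, det_mul]
  refine ⟨hamgm.trans ?_, fun hQ1 => hamgm.trans_lt ?_⟩
  · rw [← sq]
    exact pow_le_pow_left₀ hdetH (det_le_det_of_le hH0 hHN hN) 2
  · rw [← sq]
    refine pow_lt_pow_left₀ (det_lt_det_of_le_of_ne hH0 hHN hN fun hHN' => hQ1 ?_) hdetH
      two_ne_zero
    refine eq_one_of_add_inv_eq_two hQ.isHermitian ((isUnit_iff_isUnit_det Q).mp hQ.isUnit) ?_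
    have hSWS : S * (Q + Q⁻¹ - 2) * S = 0 := by
      simpa [hHN'] using hNH.symm
    have hSunit : IsUnit S := (isUnit_iff_isUnit_det S).mpr hSu
    exact sub_eq_zero.mp (hSunit.mul_right_eq_zero.mp (hSunit.mul_left_eq_zero.mp hSWS))

end Matrix

theorem det_inequality_DQ_general (n : ℕ) (d : Fin n → ℝ)
    (hd : ∀ i, 0 < d i ∧ d i < 1)
    (Q : Matrix (Fin n) (Fin n) ℝ)
    (hDQ : (Q - Matrix.diagonal d).PosSemidef)
    (hQD : ((Matrix.diagonal d)⁻¹ - Q).PosSemidef) :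
    (((1 - Matrix.diagonal (fun i => Real.sqrt (d i)) * Q⁻¹ *
          Matrix.diagonal (fun i => Real.sqrt (d i))) *
      (1 - Matrix.diagonal (fun i => Real.sqrt (d i)) * Q *
          Matrix.diagonal (fun i => Real.sqrt (d i)))).det ≤
        ((1 - Matrix.diagonal d) * (1 - Matrix.diagonal d)).det) ∧
    (Q ≠ 1 →
      (((1 - Matrix.diagonal (fun i => Real.sqrt (d i)) * Q⁻¹ *
            Matrix.diagonal (fun i => Real.sqrt (d i))) *
        (1 - Matrix.diagonal (fun i => Real.sqrt (d i)) * Q *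
            Matrix.diagonal (fun i => Real.sqrt (d i)))).det <
          ((1 - Matrix.diagonal d) * (1 - Matrix.diagonal d)).det)) := by
  set S := Matrix.diagonal (fun i => Real.sqrt (d i))
  have hSS : S * S = diagonal d := by
    rw [diagonal_mul_diagonal]
    exact congrArg diagonal (funext fun i => Real.mul_self_sqrt (hd i).1.le)
  have hS : IsSelfAdjoint S := isHermitian_diagonal _
  have hSu : IsUnit S.det := by
    rw [det_diagonal]
    exact isUnit_iff_ne_zero.mpr <|
      Finset.prod_ne_zero_iff.mpr fun i _ => (Real.sqrt_pos.mpr (hd i).1).ne'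
  have hN : (1 - S * S).PosDef := by
    rw [hSS, ← diagonal_one, diagonal_sub, posDef_diagonal_iff]
    exact fun i => sub_pos.mpr (hd i).2
  rw [← hSS] at hDQ hQD ⊢
  exact det_one_sub_conj_inv_mul_one_sub_conj_le hS hSu hN hDQ hQD

/-- Let `D = diagonal d` with `1 > d 0 ≥ d 1 ≥ … ≥ d (n-1) > 0`, let
`D^{1/2} = diagonal (√d)`, and let `Q` be a symmetric real `n × n` matrix with
`D ⪯ Q ⪯ D⁻¹` (Loewner order). Then
`det((I - D^{1/2} Q⁻¹ D^{1/2})(I - D^{1/2} Q D^{1/2})) ≤ det((I - D)(I - D))`, and the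
inequality is strict whenever `Q ≠ I`. -/
theorem det_inequality_DQ (n : ℕ) (hn : 0 < n) (d : Fin n → ℝ)
    (hd : ∀ i, 0 < d i ∧ d i < 1) (hmono : Antitone d)
    (Q : Matrix (Fin n) (Fin n) ℝ) (hQsymm : Q.IsHermitian)
    (hDQ : (Q - Matrix.diagonal d).PosSemidef)
    (hQD : ((Matrix.diagonal d)⁻¹ - Q).PosSemidef) :
    (((1 - Matrix.diagonal (fun i => Real.sqrt (d i)) * Q⁻¹ *
          Matrix.diagonal (fun i => Real.sqrt (d i))) *
      (1 - Matrix.diagonal (fun i => Real.sqrt (d i)) * Q *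
          Matrix.diagonal (fun i => Real.sqrt (d i)))).det ≤
        ((1 - Matrix.diagonal d) * (1 - Matrix.diagonal d)).det) ∧
    (Q ≠ 1 →
      (((1 - Matrix.diagonal (fun i => Real.sqrt (d i)) * Q⁻¹ *
            Matrix.diagonal (fun i => Real.sqrt (d i))) *
        (1 - Matrix.diagonal (fun i => Real.sqrt (d i)) * Q *
            Matrix.diagonal (fun i => Real.sqrt (d i)))).det <
          ((1 - Matrix.diagonal d) * (1 - Matrix.diagonal d)).det)) :=
  det_inequality_DQ_general n d hd Q hDQ hQD
end

section
/- Let n be a positive integer, let D = Diag(d₁, …, d_n) be a diagonal real n×n matrix with 1 > d₁ ≥ d₂ ≥ … ≥ d_n > 0, write D^{1/2} = Diag(√d₁, …, √d_n), and let Q_W be a symmetric real n×n matrix with D ⪯ Q_W ⪯ D⁻¹. Then the 3n×3n block matrix Q_s(Q_W) = [[I, D, D^{1/2}], [D, I, D^{1/2}Q_W], [D^{1/2}, Q_W D^{1/2}, Q_W]] is symmetric and positive semidefinite. -/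
/-!
With `S = D^{1/2}`, realize the covariance by `Y₁ = Z₁`, `W = S Y₁ + Z₂`, `Y₂ = S W + Z₃` for
uncorrelated `Z₁, Z₂, Z₃` of covariances `I`, `Q_W - D` and `I - S Q_W S`. Algebraically this is a
congruence `Q_s(Q_W) = A C Aᴴ` with `C` block diagonal, and the two nontrivial blocks of `C` are
positive semidefinite exactly because `D ⪯ Q_W` and (after conjugating by `S`) `Q_W ⪯ D⁻¹`.
-/

open Matrix

/-- The `3n × 3n` covariance matrix
`Q_s(Q_W) = [[I, D, D^{1/2}], [D, I, D^{1/2} Q_W], [D^{1/2}, Q_W D^{1/2}, Q_W]]`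
indexed by `(Fin n ⊕ Fin n) ⊕ Fin n`. -/
noncomputable def Qs (n : ℕ) (d : Fin n → ℝ) (QW : Matrix (Fin n) (Fin n) ℝ) :
    Matrix ((Fin n ⊕ Fin n) ⊕ Fin n) ((Fin n ⊕ Fin n) ⊕ Fin n) ℝ :=
  Matrix.fromBlocks
    (Matrix.fromBlocks 1 (Matrix.diagonal d) (Matrix.diagonal d) 1)
    (Matrix.of (Sum.elim (Matrix.diagonal fun i => Real.sqrt (d i))
      ((Matrix.diagonal fun i => Real.sqrt (d i)) * QW)))
    (Matrix.of fun i => Sum.elim ((Matrix.diagonal fun i => Real.sqrt (d i)) i)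
      ((QW * Matrix.diagonal fun i => Real.sqrt (d i)) i))
    QW

namespace Matrix

variable {m n R : Type*} [Fintype m] [Fintype n] [DecidableEq m] [Ring R]

/-- `Q_s` written in terms of a square root `S` of `D`. -/
def condIndepCov (S Q : Matrix m m R) : Matrix ((m ⊕ m) ⊕ m) ((m ⊕ m) ⊕ m) R :=
  fromBlocks (fromBlocks 1 (S * S) (S * S) 1) (fromRows S (S * Q)) (fromCols S (Q * S)) Q

lemma condIndepCov_eq_mul_mul_conjTranspose [StarRing R] {S : Matrix m m R} (hS : Sᴴ = S)
    (Q : Matrix m m R) :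
    condIndepCov S Q =
      fromBlocks (fromBlocks 1 0 (S * S) S) (fromRows 0 1) (fromCols S 1) 0 *
        fromBlocks (fromBlocks 1 0 0 (Q - S * S)) 0 0 (1 - S * Q * S) *
        (fromBlocks (fromBlocks 1 0 (S * S) S) (fromRows 0 1) (fromCols S 1) 0)ᴴ := by
  simp only [fromBlocks_conjTranspose, conjTranspose_fromRows_eq_fromCols_conjTranspose,
    conjTranspose_fromCols_eq_fromRows_conjTranspose, conjTranspose_mul, hS, conjTranspose_one,
    conjTranspose_zero, fromBlocks_multiply, fromBlocks_mul_fromRows, fromCols_mul_fromBlocks,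
    fromCols_mul_fromRows, Matrix.mul_zero, Matrix.zero_mul, add_zero, zero_add, Matrix.one_mul,
    Matrix.mul_one, fromRows_mul, mul_fromCols]
  rw [← fromRows_zero (m₁ := m) (m₂ := m) (n := m), fromCols_fromRows_eq_fromBlocks,
    fromBlocks_add]
  simp only [condIndepCov, fromBlocks_inj, fromRows_ext_iff, fromCols_ext_iff, add_zero, true_and]
  refine ⟨?_, ?_, ?_, ?_⟩ <;> noncomm_ring

variable [PartialOrder R] [StarRing R] [AddLeftMono R]

lemma PosSemidef.fromBlocks_zero [DecidableEq n] {A : Matrix m m R} {B : Matrix n n R}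
    (hA : A.PosSemidef) (hB : B.PosSemidef) : (fromBlocks A 0 0 B).PosSemidef := by
  let E₁ : Matrix (m ⊕ n) m R := fromRows 1 0
  let E₂ : Matrix (m ⊕ n) n R := fromRows 0 1
  have hsum : fromBlocks A 0 0 B = E₁ * A * E₁ᴴ + E₂ * B * E₂ᴴ := by
    ext (i | i) (j | j) <;>
      simp [E₁, E₂, conjTranspose_fromRows_eq_fromCols_conjTranspose, fromRows_mul]
  rw [hsum]
  exact (hA.mul_mul_conjTranspose_same _).add (hB.mul_mul_conjTranspose_same _)

lemma PosSemidef.condIndepCov [StarOrderedRing R] {S Q : Matrix m m R} (hS : Sᴴ = S)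
    (hQ : (Q - S * S).PosSemidef) (hQ' : (1 - S * Q * S).PosSemidef) :
    (condIndepCov S Q).PosSemidef := by
  rw [condIndepCov_eq_mul_mul_conjTranspose hS]
  exact ((PosSemidef.one.fromBlocks_zero hQ).fromBlocks_zero hQ').mul_mul_conjTranspose_same _

end Matrix

section diagonal

variable {m : Type*} [Fintype m] [DecidableEq m] {d : m → ℝ}

lemma inv_diagonal_of_ne_zero {K : Type*} [Field K] {v : m → K} (hv : ∀ i, v i ≠ 0) :
    (diagonal v)⁻¹ = diagonal v⁻¹ := by
  refine inv_eq_right_inv ?_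
  rw [diagonal_mul_diagonal, ← diagonal_one]
  exact congrArg _ (funext fun i ↦ mul_inv_cancel₀ (hv i))

lemma diagonal_sqrt_mul_self (hd : ∀ i, 0 ≤ d i) :
    diagonal (fun i ↦ √(d i)) * diagonal (fun i ↦ √(d i)) = diagonal d := by
  rw [diagonal_mul_diagonal]
  exact congrArg _ (funext fun i ↦ Real.mul_self_sqrt (hd i))

lemma diagonal_sqrt_mul_inv_mul (hd : ∀ i, 0 < d i) :
    diagonal (fun i ↦ √(d i)) * (diagonal d)⁻¹ * diagonal (fun i ↦ √(d i)) = 1 := by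
  rw [inv_diagonal_of_ne_zero fun i ↦ (hd i).ne', diagonal_mul_diagonal, diagonal_mul_diagonal,
    ← diagonal_one]
  refine congrArg _ (funext fun i ↦ ?_)
  rw [Pi.inv_apply, mul_right_comm, Real.mul_self_sqrt (hd i).le, mul_inv_cancel₀ (hd i).ne']

end diagonal

lemma Qs_eq_condIndepCov {n : ℕ} {d : Fin n → ℝ} (hd : ∀ i, 0 ≤ d i)
    (QW : Matrix (Fin n) (Fin n) ℝ) :
    Qs n d QW = condIndepCov (diagonal fun i ↦ √(d i)) QW := by
  rw [condIndepCov, diagonal_sqrt_mul_self hd]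
  rfl

theorem Qs_posSemidef_general (n : ℕ) (d : Fin n → ℝ)
    (hd : ∀ i, 0 < d i ∧ d i < 1)
    (QW : Matrix (Fin n) (Fin n) ℝ)
    (hDQW : (QW - Matrix.diagonal d).PosSemidef)
    (hQWD : ((Matrix.diagonal d)⁻¹ - QW).PosSemidef) :
    (Qs n d QW).IsSymm ∧ (Qs n d QW).PosSemidef := by
  set S : Matrix (Fin n) (Fin n) ℝ := diagonal fun i ↦ √(d i)
  have hS : Sᴴ = S := by simp [S]
  have hSS : S * S = diagonal d := diagonal_sqrt_mul_self fun i ↦ (hd i).1.le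
  have hSQS : (1 - S * QW * S).PosSemidef := by
    have h := hQWD.mul_mul_conjTranspose_same S
    rwa [hS, Matrix.mul_sub, Matrix.sub_mul, diagonal_sqrt_mul_inv_mul fun i ↦ (hd i).1] at h
  have hpsd : (Qs n d QW).PosSemidef := by
    rw [Qs_eq_condIndepCov fun i ↦ (hd i).1.le]
    exact .condIndepCov hS (hSS ▸ hDQW) hSQS
  exact ⟨isHermitian_iff_isSymm.mp hpsd.1, hpsd⟩

/-- Let `D = diagonal d` with `1 > d 0 ≥ … ≥ d (n-1) > 0`, and let `Q_W` be a symmetric real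
`n × n` matrix with `D ⪯ Q_W ⪯ D⁻¹` (Loewner order).  Then the `3n × 3n` block matrix
`Q_s(Q_W) = [[I, D, D^{1/2}], [D, I, D^{1/2} Q_W], [D^{1/2}, Q_W D^{1/2}, Q_W]]`
is symmetric and positive semidefinite. -/
theorem Qs_posSemidef (n : ℕ) (hn : 0 < n) (d : Fin n → ℝ)
    (hd : ∀ i, 0 < d i ∧ d i < 1) (hmono : Antitone d)
    (QW : Matrix (Fin n) (Fin n) ℝ) (hQWsymm : QW.IsHermitian)
    (hDQW : (QW - Matrix.diagonal d).PosSemidef)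
    (hQWD : ((Matrix.diagonal d)⁻¹ - QW).PosSemidef) :
    (Qs n d QW).IsSymm ∧ (Qs n d QW).PosSemidef :=
  Qs_posSemidef_general n d hd QW hDQW hQWD
end

section
/- Let p₁, p₂ be positive integers and let Q ∈ ℝ^{(p₁+p₂)×(p₁+p₂)} be symmetric positive definite with blocks Q₁₁ ∈ ℝ^{p₁×p₁}, Q₂₂ ∈ ℝ^{p₂×p₂} and Q₁₂ ∈ ℝ^{p₁×p₂}. Then there exist invertible matrices S₁ ∈ ℝ^{p₁×p₁}, S₂ ∈ ℝ^{p₂×p₂}, nonnegative integers p₁₁ and p₁₂ with p₁₁ + p₁₂ ≤ min(p₁, p₂), and reals 1 > d₁ ≥ d₂ ≥ … ≥ d_{p₁₂} > 0, such that S₁Q₁₁S₁ᵀ = I_{p₁}, S₂Q₂₂S₂ᵀ = I_{p₂}, and S₁Q₁₂S₂ᵀ = D₃, where D₃ ∈ ℝ^{p₁×p₂} has entries D₃(i,i) = 1 for 1 ≤ i ≤ p₁₁, D₃(i,i) = d_{i−p₁₁} for p₁₁ < i ≤ p₁₁ + p₁₂, and all other entries zero. (Existence of the canonical variable form of a tuple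 of Gaussian random vectors.) -/
/-!
Whiten the two diagonal blocks: with `A₁ Q₁₁ A₁ᴴ = 1` and `A₂ Q₂₂ A₂ᴴ = 1`, the cross block
becomes `M = A₁ Q₁₂ A₂ᴴ`. A singular value decomposition `Uᴴ M V = Σ` with unitary `U`, `V`
leaves the whitened blocks equal to `1`, so `S₁ = Uᴴ A₁`, `S₂ = Vᴴ A₂` do the job. The
transformed joint covariance `[[1, Σ], [Σᴴ, 1]]` is still positive definite; its `2 × 2`
principal minors `1 - σᵢ²` are positive, so every canonical correlation is `< 1` and `p₁₁ = 0`.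
-/

open Matrix Module
open scoped ComplexOrder

variable {𝕜 : Type*} [RCLike 𝕜]

namespace LinearMap

variable {E F : Type*}
  [NormedAddCommGroup E] [InnerProductSpace 𝕜 E] [FiniteDimensional 𝕜 E]
  [NormedAddCommGroup F] [InnerProductSpace 𝕜 F] [FiniteDimensional 𝕜 F]
  (T : E →ₗ[𝕜] F) {n : ℕ}

noncomputable def rightSingularBasis (hn : finrank 𝕜 E = n) : OrthonormalBasis (Fin n) 𝕜 E :=
  T.isSymmetric_adjoint_comp_self.eigenvectorBasis hn

theorem inner_apply_rightSingularBasis (hn : finrank 𝕜 E = n) (i j : Fin n) :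
    inner 𝕜 (T (T.rightSingularBasis hn i)) (T (T.rightSingularBasis hn j)) =
      if i = j then ((T.singularValues j ^ 2 : ℝ) : 𝕜) else 0 := by
  rw [← adjoint_inner_right, ← comp_apply, rightSingularBasis,
    IsSymmetric.apply_eigenvectorBasis, inner_smul_right,
    orthonormal_iff_ite.mp (OrthonormalBasis.orthonormal _), T.sq_singularValues_fin hn]
  split_ifs <;> simp

theorem apply_rightSingularBasis_eq_zero (hn : finrank 𝕜 E = n) (j : Fin n)
    (hj : finrank 𝕜 (range T) ≤ j) : T (T.rightSingularBasis hn j) = 0 := by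
  have := T.inner_apply_rightSingularBasis hn j j
  rwa [if_pos rfl, (T.singularValues_eq_zero_iff_le_finrank_range).2 hj, sq, zero_mul,
    RCLike.ofReal_zero, inner_self_eq_zero] at this

theorem exists_orthonormalBasis_inner_apply_eq_singularValues {m : ℕ} (hn : finrank 𝕜 E = n)
    (hm : finrank 𝕜 F = m) :
    ∃ (u : OrthonormalBasis (Fin m) 𝕜 F) (v : OrthonormalBasis (Fin n) 𝕜 E),
      ∀ i j, inner 𝕜 (u i) (T (v j)) = if (i : ℕ) = j then (T.singularValues j : 𝕜) else 0 := by
  have hinner := T.inner_apply_rightSingularBasis hn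
  have hzero := T.apply_rightSingularBasis_eq_zero hn
  set v := T.rightSingularBasis hn
  set σ := T.singularValues
  set r := finrank 𝕜 (range T)
  have hrn : r ≤ n := hn ▸ finrank_range_le T
  have hrm : r ≤ m := hm ▸ Submodule.finrank_le _
  have hσ : ∀ k : Fin n, (k : ℕ) < r → (σ k : 𝕜) ≠ 0 := fun k hk => by
    simpa using (T.singularValues_pos_iff_lt_finrank_range.2 hk).ne'
  -- the left singular vectors `σᵢ⁻¹ T vᵢ`, for `i < r`, completed below to a basis of `F`
  let w : Fin m → F := fun i => if h : (i : ℕ) < n then (σ i : 𝕜)⁻¹ • T (v ⟨i, h⟩) else 0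
  have hw : Orthonormal 𝕜 ({i : Fin m | (i : ℕ) < r}.domRestrict w) := by
    rw [orthonormal_iff_ite]
    rintro ⟨i, hi⟩ ⟨j, hj⟩
    simp only [Set.domRestrict_apply, w, dif_pos (hi.trans_le hrn), dif_pos (hj.trans_le hrn),
      inner_smul_left, inner_smul_right, hinner, Fin.ext_iff, Subtype.ext_iff]
    split_ifs with h
    · simp only [h, map_inv₀, RCLike.conj_ofReal, RCLike.ofReal_pow]
      field_simp [hσ ⟨j, hj.trans_le hrn⟩ hj]
    · simp
  obtain ⟨u, hu⟩ := hw.exists_orthonormalBasis_extension_of_card_eq (by simpa using hm)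
  refine ⟨u, v, fun i j => ?_⟩
  rcases lt_or_ge (j : ℕ) r with hj | hj
  · have hTv : T (v j) = (σ j : 𝕜) • u ⟨j, hj.trans_le hrm⟩ := by
      rw [hu _ hj]
      simp only [w, dif_pos j.2, smul_inv_smul₀ (hσ j hj)]
    simp only [hTv, inner_smul_right, orthonormal_iff_ite.mp u.orthonormal, Fin.ext_iff, mul_ite,
      mul_one, mul_zero]
  · rw [hzero j hj, inner_zero_right, (T.singularValues_eq_zero_iff_le_finrank_range).2 hj]
    simp

end LinearMap

namespace Matrix

theorem conjTranspose_toMatrix_mul_mul_toMatrix_apply {m n : ℕ}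
    (u : OrthonormalBasis (Fin m) 𝕜 (EuclideanSpace 𝕜 (Fin m)))
    (M : Matrix (Fin m) (Fin n) 𝕜) (v : OrthonormalBasis (Fin n) 𝕜 (EuclideanSpace 𝕜 (Fin n)))
    (i : Fin m) (j : Fin n) :
    (((EuclideanSpace.basisFun (Fin m) 𝕜).toBasis.toMatrix u)ᴴ * M *
        (EuclideanSpace.basisFun (Fin n) 𝕜).toBasis.toMatrix v) i j =
      inner 𝕜 (u i) (toLpLin 2 2 M (v j)) := by
  simp only [mul_apply, conjTranspose_apply, Module.Basis.toMatrix_apply,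
    OrthonormalBasis.coe_toBasis_repr_apply, EuclideanSpace.basisFun_repr, RCLike.star_def,
    Finset.sum_mul, toLpLin_apply, EuclideanSpace.inner_eq_star_dotProduct, dotProduct, mulVec,
    Pi.star_apply]
  rw [Finset.sum_comm]
  exact Finset.sum_congr rfl fun _ _ => Finset.sum_congr rfl fun _ _ => by ring

theorem exists_unitary_conjTranspose_mul_mul_eq_singularValues {m n : ℕ}
    (M : Matrix (Fin m) (Fin n) 𝕜) :
    ∃ U ∈ unitaryGroup (Fin m) 𝕜, ∃ V ∈ unitaryGroup (Fin n) 𝕜, ∀ i j,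
      (Uᴴ * M * V) i j = if (i : ℕ) = j then ((toLpLin 2 2 M).singularValues j : 𝕜) else 0 := by
  obtain ⟨u, v, huv⟩ := (toLpLin 2 2 M).exists_orthonormalBasis_inner_apply_eq_singularValues
    finrank_euclideanSpace_fin finrank_euclideanSpace_fin
  refine ⟨_, (EuclideanSpace.basisFun _ 𝕜).toMatrix_orthonormalBasis_mem_unitary u,
    _, (EuclideanSpace.basisFun _ 𝕜).toMatrix_orthonormalBasis_mem_unitary v, fun i j => ?_⟩
  rw [conjTranspose_toMatrix_mul_mul_toMatrix_apply, huv]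

theorem conjTranspose_mul_mul_conjTranspose_eq_one_of_mem_unitaryGroup {n : Type*}
    [Fintype n] [DecidableEq n] {S A U : Matrix n n 𝕜} (hA : S * A * Sᴴ = 1)
    (hU : U ∈ unitaryGroup n 𝕜) : (Uᴴ * S) * A * (Uᴴ * S)ᴴ = 1 := by
  calc (Uᴴ * S) * A * (Uᴴ * S)ᴴ = Uᴴ * (S * A * Sᴴ) * U := by
        simp only [conjTranspose_mul, conjTranspose_conjTranspose, Matrix.mul_assoc]
    _ = 1 := by rw [hA, Matrix.mul_one, ← star_eq_conjTranspose, Unitary.star_mul_self_of_mem hU]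

namespace PosDef

open scoped MatrixOrder in
theorem exists_isUnit_mul_mul_conjTranspose_eq_one {n : Type*} [Fintype n]
    [DecidableEq n] {P : Matrix n n 𝕜} (hP : P.PosDef) :
    ∃ S : Matrix n n 𝕜, IsUnit S ∧ S * P * Sᴴ = 1 := by
  obtain ⟨B, rfl⟩ := CStarAlgebra.nonneg_iff_eq_star_mul_self.mp hP.posSemidef.nonneg
  have hB : IsUnit B.det := by
    have := hP.isUnit
    rw [isUnit_iff_isUnit_det, det_mul] at this
    exact isUnit_of_mul_isUnit_right this
  have hB' : IsUnit Bᴴ.det := by simpa [det_conjTranspose] using hB.star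
  refine ⟨Bᴴ⁻¹, isUnit_nonsing_inv_iff.2 ((isUnit_iff_isUnit_det _).2 hB'), ?_⟩
  rw [conjTranspose_nonsing_inv, conjTranspose_conjTranspose, star_eq_conjTranspose,
    ← Matrix.mul_assoc, nonsing_inv_mul _ hB', Matrix.one_mul, mul_nonsing_inv _ hB]

theorem fromBlocks_conj {m n : Type*} [Fintype m] [Fintype n] [DecidableEq m] [DecidableEq n]
    {A : Matrix m m 𝕜} {B : Matrix m n 𝕜} {D : Matrix n n 𝕜}
    (h : (fromBlocks A B Bᴴ D).PosDef) {S₁ : Matrix m m 𝕜} {S₂ : Matrix n n 𝕜}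
    (h₁ : IsUnit S₁) (h₂ : IsUnit S₂) :
    (fromBlocks (S₁ * A * S₁ᴴ) (S₁ * B * S₂ᴴ) (S₁ * B * S₂ᴴ)ᴴ (S₂ * D * S₂ᴴ)).PosDef := by
  have hS : IsUnit (fromBlocks S₁ 0 0 S₂) := isUnit_fromBlocks_zero₂₁.2 ⟨h₁, h₂⟩
  convert (hS.posDef_star_right_conjugate_iff).2 h using 1
  simp [fromBlocks_multiply, star_eq_conjTranspose, fromBlocks_conjTranspose, Matrix.mul_assoc]

theorem norm_apply_lt_one_of_fromBlocks_one {m n : Type*} [DecidableEq m] [DecidableEq n]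
    {N : Matrix m n 𝕜}
    (h : (fromBlocks 1 N Nᴴ 1).PosDef) (i : m) (j : n) : ‖N i j‖ < 1 := by
  have h2 : N i j * (starRingEnd 𝕜) (N i j) < 1 := by
    have := (h.submatrix (injective_pair_iff_ne.2 (Sum.inl_ne_inr (a := i) (b := j)))).det_pos
    rw [det_fin_two] at this
    simpa using this
  rw [RCLike.mul_conj] at h2
  norm_cast at h2
  exact (pow_lt_one_iff_of_nonneg (norm_nonneg _) two_ne_zero).1 h2

theorem exists_canonical_form_fromBlocks {p₁ p₂ : ℕ}
    {A : Matrix (Fin p₁) (Fin p₁) 𝕜} {B : Matrix (Fin p₁) (Fin p₂) 𝕜}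
    {D : Matrix (Fin p₂) (Fin p₂) 𝕜} (h : (fromBlocks A B Bᴴ D).PosDef) :
    ∃ (S₁ : Matrix (Fin p₁) (Fin p₁) 𝕜) (S₂ : Matrix (Fin p₂) (Fin p₂) 𝕜) (σ : ℕ → ℝ) (r : ℕ),
      IsUnit S₁ ∧ IsUnit S₂ ∧ S₁ * A * S₁ᴴ = 1 ∧ S₂ * D * S₂ᴴ = 1 ∧ r ≤ min p₁ p₂ ∧
      Antitone σ ∧ (∀ k < r, 0 < σ k) ∧ (∀ k, r ≤ k → σ k = 0) ∧ (∀ k, σ k < 1) ∧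
      ∀ i j, (S₁ * B * S₂ᴴ) i j = if (i : ℕ) = j then (σ j : 𝕜) else 0 := by
  have hA : A.PosDef := h.submatrix Sum.inl_injective
  have hD : D.PosDef := h.submatrix Sum.inr_injective
  obtain ⟨A₁, hA₁, hA⟩ := hA.exists_isUnit_mul_mul_conjTranspose_eq_one
  obtain ⟨A₂, hA₂, hD⟩ := hD.exists_isUnit_mul_mul_conjTranspose_eq_one
  obtain ⟨U, hU, V, hV, hUV⟩ := (A₁ * B * A₂ᴴ).exists_unitary_conjTranspose_mul_mul_eq_singularValues
  set T := toLpLin 2 2 (A₁ * B * A₂ᴴ)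
  have hS₁ : IsUnit (Uᴴ * A₁) := (Unitary.isUnit_coe (U := ⟨U, hU⟩)).star.mul hA₁
  have hS₂ : IsUnit (Vᴴ * A₂) := (Unitary.isUnit_coe (U := ⟨V, hV⟩)).star.mul hA₂
  have hS₁A := conjTranspose_mul_mul_conjTranspose_eq_one_of_mem_unitaryGroup hA hU
  have hS₂D := conjTranspose_mul_mul_conjTranspose_eq_one_of_mem_unitaryGroup hD hV
  have hS₁B : (Uᴴ * A₁) * B * (Vᴴ * A₂)ᴴ = Uᴴ * (A₁ * B * A₂ᴴ) * V := by
    simp only [conjTranspose_mul, conjTranspose_conjTranspose, Matrix.mul_assoc]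
  have hN := h.fromBlocks_conj hS₁ hS₂
  rw [hS₁A, hS₂D, hS₁B] at hN
  have hr : finrank 𝕜 (LinearMap.range T) ≤ min p₁ p₂ := le_min
    ((Submodule.finrank_le _).trans_eq finrank_euclideanSpace_fin)
    ((LinearMap.finrank_range_le T).trans_eq finrank_euclideanSpace_fin)
  refine ⟨_, _, T.singularValues, _, hS₁, hS₂, hS₁A, hS₂D, hr, T.singularValues_antitone,
    fun k => T.singularValues_pos_iff_lt_finrank_range.2,
    fun k => T.singularValues_eq_zero_iff_le_finrank_range.2, fun k => ?_, hS₁B ▸ hUV⟩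
  rcases lt_or_ge k (finrank 𝕜 (LinearMap.range T)) with hk | hk
  · have := hN.norm_apply_lt_one_of_fromBlocks_one ⟨k, by omega⟩ ⟨k, by omega⟩
    rwa [hUV, if_pos rfl, RCLike.norm_ofReal, abs_of_nonneg (T.singularValues_nonneg k)] at this
  · rw [(T.singularValues_eq_zero_iff_le_finrank_range).2 hk]
    exact one_pos

end PosDef

end Matrix

theorem exists_canonical_variable_form_general (p₁ p₂ : ℕ)
    (Q₁₁ : Matrix (Fin p₁) (Fin p₁) ℝ) (Q₂₂ : Matrix (Fin p₂) (Fin p₂) ℝ)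
    (Q₁₂ : Matrix (Fin p₁) (Fin p₂) ℝ)
    (hQ : (Matrix.fromBlocks Q₁₁ Q₁₂ Q₁₂ᵀ Q₂₂).PosDef) :
    ∃ (S₁ : Matrix (Fin p₁) (Fin p₁) ℝ) (S₂ : Matrix (Fin p₂) (Fin p₂) ℝ)
      (p₁₁ p₁₂' : ℕ) (d : ℕ → ℝ),
      IsUnit S₁ ∧ IsUnit S₂ ∧
      p₁₁ + p₁₂' ≤ min p₁ p₂ ∧
      (∀ i < p₁₂', 0 < d i ∧ d i < 1) ∧
      (∀ i j, i ≤ j → j < p₁₂' → d j ≤ d i) ∧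
      S₁ * Q₁₁ * S₁ᵀ = 1 ∧
      S₂ * Q₂₂ * S₂ᵀ = 1 ∧
      (∀ (i : Fin p₁) (j : Fin p₂),
        (S₁ * Q₁₂ * S₂ᵀ) i j =
          if (i : ℕ) = (j : ℕ) then
            (if (i : ℕ) < p₁₁ then (1 : ℝ)
              else if (i : ℕ) < p₁₁ + p₁₂' then d ((i : ℕ) - p₁₁) else 0)
          else 0) := by
  rw [← conjTranspose_eq_transpose_of_trivial] at hQ
  obtain ⟨S₁, S₂, σ, r, hS₁, hS₂, h₁₁, h₂₂, hr, hσ, hσpos, hσzero, hσ1, h₁₂⟩ :=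
    hQ.exists_canonical_form_fromBlocks
  simp only [conjTranspose_eq_transpose_of_trivial] at h₁₁ h₂₂ h₁₂
  refine ⟨S₁, S₂, 0, r, σ, hS₁, hS₂, by simpa using hr, fun i hi => ⟨hσpos i hi, hσ1 i⟩,
    fun i j hij _ => hσ hij, h₁₁, h₂₂, fun i j => ?_⟩
  rw [h₁₂, Nat.zero_add, Nat.sub_zero, if_neg (Nat.not_lt_zero _), RCLike.ofReal_real_eq_id,
    id]
  split_ifs with hij hir
  · rw [hij]
  · exact hσzero _ (hij ▸ not_lt.1 hir)
  · rfl

/-- **Existence of the canonical variable form** of a tuple of Gaussian random vectors.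
Let `Q` be the symmetric positive-definite matrix with blocks `Q₁₁, Q₂₂, Q₁₂`.  Then there
exist invertible matrices `S₁, S₂`, natural numbers `p₁₁, p₁₂` with `p₁₁ + p₁₂ ≤ min p₁ p₂`,
and reals `1 > d 0 ≥ d 1 ≥ … ≥ d (p₁₂ - 1) > 0` such that `S₁ Q₁₁ S₁ᵀ = I`,
`S₂ Q₂₂ S₂ᵀ = I`, and `S₁ Q₁₂ S₂ᵀ` is the `p₁ × p₂` matrix with `1` on the first `p₁₁`
diagonal entries, the canonical correlation coefficients `d` on the next `p₁₂` diagonal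
entries, and `0` elsewhere. -/
theorem exists_canonical_variable_form (p₁ p₂ : ℕ) (hp₁ : 0 < p₁) (hp₂ : 0 < p₂)
    (Q₁₁ : Matrix (Fin p₁) (Fin p₁) ℝ) (Q₂₂ : Matrix (Fin p₂) (Fin p₂) ℝ)
    (Q₁₂ : Matrix (Fin p₁) (Fin p₂) ℝ)
    (hQ : (Matrix.fromBlocks Q₁₁ Q₁₂ Q₁₂ᵀ Q₂₂).PosDef) :
    ∃ (S₁ : Matrix (Fin p₁) (Fin p₁) ℝ) (S₂ : Matrix (Fin p₂) (Fin p₂) ℝ)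
      (p₁₁ p₁₂' : ℕ) (d : ℕ → ℝ),
      IsUnit S₁ ∧ IsUnit S₂ ∧
      p₁₁ + p₁₂' ≤ min p₁ p₂ ∧
      (∀ i < p₁₂', 0 < d i ∧ d i < 1) ∧
      (∀ i j, i ≤ j → j < p₁₂' → d j ≤ d i) ∧
      S₁ * Q₁₁ * S₁ᵀ = 1 ∧
      S₂ * Q₂₂ * S₂ᵀ = 1 ∧
      (∀ (i : Fin p₁) (j : Fin p₂),
        (S₁ * Q₁₂ * S₂ᵀ) i j =
          if (i : ℕ) = (j : ℕ) then
            (if (i : ℕ) < p₁₁ then (1 : ℝ)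
              else if (i : ℕ) < p₁₁ + p₁₂' then d ((i : ℕ) - p₁₁) else 0)
          else 0) :=
  exists_canonical_variable_form_general p₁ p₂ Q₁₁ Q₂₂ Q₁₂ hQ
end
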